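/- arXiv:1610.02672 — 7 statements merged into one kernel-verified Lean document; each statement's English description precedes it below -/
import Mathlib

section
/- For every integer p ≥ 4, there exists a finite string C-group of rank 3 of type {p, p} that is externally self-dual, i.e., it admits a group automorphism sending each ρᵢ to ρ_{2−i} but admits no dualizing element. -/
/-- An element `α` is dualizing for the generating family `ρ` if conjugation by `α`
sends each `ρ i` to `ρ (n - 1 - i)`. -/
def IsDualizing {G : Type*} [Group G] {n : ℕ} (ρ : Fin n → G) (α : G) : Prop :=
  ∀ i : Fin n, α * ρ i * α⁻¹ = ρ i.rev

/-- `ρ : Fin n → G` makes `G` a string C-group of rank `n`: the `ρ i` generate `G`,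
each has order 2, far-apart generators commute, and the intersection property holds. -/
def IsStringCGroup {G : Type*} [Group G] {n : ℕ} (ρ : Fin n → G) : Prop :=
  Subgroup.closure (Set.range ρ) = ⊤ ∧
  (∀ i, orderOf (ρ i) = 2) ∧
  (∀ i j : Fin n, ((i : ℕ) + 2 ≤ (j : ℕ) ∨ (j : ℕ) + 2 ≤ (i : ℕ)) → (ρ i * ρ j) ^ 2 = 1) ∧
  ∀ I J : Set (Fin n),
    Subgroup.closure (ρ '' I) ⊓ Subgroup.closure (ρ '' J) = Subgroup.closure (ρ '' (I ∩ J))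

/-!
Let `K` be the central extension of `V = 𝔽₂^(ℤ/p)` by `𝔽₂` with the cocycle
`β(m, m') = ∑ₖ m(k) m'(k + 2)` (`form p`), on which the dihedral group `D_p` acts by rotating
and reflecting coordinates, and let `Γ = K ⋊ D_p`. Take `ρ₀ = s₁`, `ρ₁ = s₀` in `D_p` and
`ρ₂ = u ρ₀ u⁻¹` with `u = (δ₀, 0) ∈ K` (`dualizer p`). Conjugation by `u` is an involution
fixing `ρ₁` and swapping `ρ₀` and `ρ₂`, so it restricts to a duality of `G = ⟨ρ₀, ρ₁, ρ₂⟩`;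
and `⟨ρ₀, ρ₁⟩ = D_p` meets its conjugate `⟨ρ₁, ρ₂⟩` in the stabiliser of `δ₀`, which is `⟨ρ₁⟩`.

A dualizing element of `G` would be `u z` with `z` centralising `G`. Such a `z` has a
constant `V`-coordinate `w ≡ e` (it commutes with the rotations), and `β(w, w) = p e` vanishes
(it commutes with `ρ₁`). So the coordinate sum of `u z` is `1 + p e = 1`, whereas every element
of `G` has coordinate sum `0` (`parity p`).
-/

open Subgroup

section Involutions
variable {G : Type*} [Group G]

theorem mem_closure_pair_of_commute {a b x : G} (ha : a * a = 1) (hb : b * b = 1)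
    (hab : Commute a b) : x ∈ closure {a, b} ↔ x = 1 ∨ x = a ∨ x = b ∨ x = a * b := by
  have hmul : ∀ y ∈ ({a, b} : Set G), ∀ z : G, (z = 1 ∨ z = a ∨ z = b ∨ z = a * b) →
      y * z = 1 ∨ y * z = a ∨ y * z = b ∨ y * z = a * b := by
    have hba : b * a = a * b := hab.eq.symm
    have haab : a * (a * b) = b := by rw [← mul_assoc, ha, one_mul]
    have hbab : b * (a * b) = a := by rw [← mul_assoc, hba, mul_assoc, hb, mul_one]
    rintro y (rfl | rfl) z (rfl | rfl | rfl | rfl) <;> simp [ha, hb, hba, haab, hbab]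
  constructor
  · intro hx
    induction hx using closure_induction_left with
    | one => exact Or.inl rfl
    | mul_left y hy z _ ih => exact hmul y hy z ih
    | inv_mul_cancel y hy z _ ih =>
      rcases hy with rfl | rfl
      · rw [inv_eq_of_mul_eq_one_right ha]; exact hmul _ (.inl rfl) z ih
      · rw [inv_eq_of_mul_eq_one_right hb]; exact hmul _ (.inr rfl) z ih
  · rintro (rfl | rfl | rfl | rfl)
    · exact one_mem _
    · exact subset_closure (.inl rfl)
    · exact subset_closure (.inr rfl)
    · exact mul_mem (subset_closure (.inl rfl)) (subset_closure (.inr rfl))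

theorem mem_closure_singleton_of_mul_self {a x : G} (ha : a * a = 1) :
    x ∈ closure {a} ↔ x = 1 ∨ x = a := by
  rw [← Set.pair_eq_singleton, mem_closure_pair_of_commute ha ha (Commute.refl a), ha]
  tauto

theorem closure_singleton_inf_eq_bot {a : G} {H : Subgroup G} (ha : a * a = 1) (haH : a ∉ H) :
    closure {a} ⊓ H = ⊥ := by
  refine eq_bot_iff.2 fun x ⟨hxa, hxH⟩ => ?_
  rcases (mem_closure_singleton_of_mul_self ha).1 hxa with rfl | rfl
  · exact one_mem _
  · exact absurd hxH haH

theorem closure_pair_inf_le_of_notMem {a c : G} {H : Subgroup G} (ha : a * a = 1)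
    (hc : c * c = 1) (hac : Commute a c) (hcH : c ∈ H) (haH : a ∉ H) :
    closure {a, c} ⊓ H ≤ closure {c} := by
  intro x hx
  obtain ⟨hx, hxH⟩ := mem_inf.1 hx
  rcases (mem_closure_pair_of_commute ha hc hac).1 hx with rfl | rfl | rfl | rfl
  · exact one_mem _
  · exact absurd hxH haH
  · exact subset_closure rfl
  · exact absurd (by simpa using mul_mem hxH (inv_mem hcH)) haH

end Involutions

section Restrict
variable {G : Type*} [Group G] {n : ℕ}

theorem IsDualizing.commute_inv_mul {ρ : Fin n → G} {α β : G} (hα : IsDualizing ρ α)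
    (hβ : IsDualizing ρ β) (i : Fin n) : Commute (α⁻¹ * β) (ρ i) := by
  have h : β * ρ i * β⁻¹ = α * ρ i * α⁻¹ := (hβ i).trans (hα i).symm
  calc α⁻¹ * β * ρ i = α⁻¹ * (β * ρ i * β⁻¹) * β := by group
    _ = ρ i * (α⁻¹ * β) := by rw [h]; group

def restrictClosure (ρ : Fin n → G) : Fin n → closure (Set.range ρ) :=
  fun i => ⟨ρ i, subset_closure (Set.mem_range_self i)⟩

theorem isStringCGroup_restrictClosure (ρ : Fin n → G) (horder : ∀ i, orderOf (ρ i) = 2)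
    (hcomm : ∀ i j : Fin n, ((i : ℕ) + 2 ≤ (j : ℕ) ∨ (j : ℕ) + 2 ≤ (i : ℕ)) → (ρ i * ρ j) ^ 2 = 1)
    (hinter : ∀ I J : Set (Fin n),
      closure (ρ '' I) ⊓ closure (ρ '' J) = closure (ρ '' (I ∩ J))) :
    IsStringCGroup (restrictClosure ρ) := by
  have hsub : ((closure (Set.range ρ)).subtype ∘ restrictClosure ρ) = ρ := rfl
  refine ⟨?_, fun i => by rw [← orderOf_submonoid]; exact horder i,
    fun i j hij => Subtype.ext (hcomm i j hij), fun I J => ?_⟩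
  · have : Set.range (restrictClosure ρ) = ((↑) : closure (Set.range ρ) → G) ⁻¹' Set.range ρ := by
      ext x
      simp [restrictClosure, Subtype.ext_iff]
    rw [this, closure_closure_coe_preimage]
  · apply map_injective (closure (Set.range ρ)).subtype_injective
    rw [map_inf _ _ _ (closure (Set.range ρ)).subtype_injective, MonoidHom.map_closure,
      MonoidHom.map_closure, MonoidHom.map_closure, ← Set.image_comp, ← Set.image_comp,
      ← Set.image_comp, hsub]
    exact hinter I J

theorem IsDualizing.of_restrictClosure {ρ : Fin n → G} {α : closure (Set.range ρ)}
    (h : IsDualizing (restrictClosure ρ) α) : IsDualizing ρ α :=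
  fun i => congrArg Subtype.val (h i)

theorem exists_mulEquiv_restrictClosure_rev (ρ : Fin n → G) (d : G ≃* G)
    (hd : ∀ i, d (ρ i) = ρ i.rev) :
    ∃ d' : closure (Set.range ρ) ≃* closure (Set.range ρ),
      ∀ i, d' (restrictClosure ρ i) = restrictClosure ρ i.rev := by
  have hmap : (closure (Set.range ρ)).map d.toMonoidHom = closure (Set.range ρ) := by
    rw [MonoidHom.map_closure, ← Set.range_comp]
    have : d.toMonoidHom ∘ ρ = ρ ∘ Fin.rev := funext hd
    rw [this, Fin.rev_surjective.range_comp]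
  exact ⟨(d.subgroupMap _).trans (MulEquiv.subgroupCongr hmap), fun i => Subtype.ext (hd i)⟩

end Restrict

section RankThree

theorem subset_singleton_of_ssubset_compl_singleton {a b : Fin 3} {S : Set (Fin 3)} (hab : a ≠ b)
    (haS : a ∈ S) (hS : S ⊂ {b}ᶜ) : S ⊆ {a} := by
  intro y hy
  obtain ⟨x, hxb, hxS⟩ := Set.exists_of_ssubset hS
  have : y ≠ x := by rintro rfl; exact hxS hy
  have : a ≠ x := by rintro rfl; exact hxS haS
  have : y ≠ b := hS.subset hy
  have : x ≠ b := hxb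
  show y = a
  omega

variable {G : Type*} [Group G] (ρ : Fin 3 → G)

theorem inf_closure_image_le_of_rank_three (hρ : ∀ i, ρ i * ρ i = 1)
    (hgen : ∀ i, ρ i ∉ closure (ρ '' {i}ᶜ))
    (hpair : ∀ i j, i ≠ j →
      closure (ρ '' {i}ᶜ) ⊓ closure (ρ '' {j}ᶜ) ≤ closure (ρ '' ({i}ᶜ ∩ {j}ᶜ)))
    (I J : Set (Fin 3)) : closure (ρ '' I) ⊓ closure (ρ '' J) ≤ closure (ρ '' (I ∩ J)) := by
  by_cases hIJ : I ⊆ J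
  · rw [Set.inter_eq_left.2 hIJ]; exact inf_le_left
  by_cases hJI : J ⊆ I
  · rw [Set.inter_eq_right.2 hJI]; exact inf_le_right
  obtain ⟨a, haI, haJ⟩ := Set.not_subset.1 hIJ
  obtain ⟨b, hbJ, hbI⟩ := Set.not_subset.1 hJI
  have hab : a ≠ b := by rintro rfl; exact haJ hbJ
  have hIb : I ⊆ {b}ᶜ := fun x hx (hxb : x = b) => hbI (hxb ▸ hx)
  have hJa : J ⊆ {a}ᶜ := fun x hx (hxa : x = a) => haJ (hxa ▸ hx)
  have eq_bot : ∀ {a : Fin 3} {S T : Set (Fin 3)}, S ⊆ {a} → T ⊆ {a}ᶜ →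
      closure (ρ '' S) ⊓ closure (ρ '' T) = ⊥ := by
    intro a S T hS hT
    refine eq_bot_iff.2 ((inf_le_inf (Subgroup.closure_mono (Set.image_mono hS))
      (Subgroup.closure_mono (Set.image_mono hT))).trans ?_)
    rw [Set.image_singleton, closure_singleton_inf_eq_bot (hρ a) (hgen a)]
  -- Incomparable subsets of a three-element set are two 2-sets, or one is a singleton.
  by_cases hI : {b}ᶜ ⊆ I
  · by_cases hJ : {a}ᶜ ⊆ J
    · rw [hIb.antisymm hI, hJa.antisymm hJ]; exact hpair b a hab.symm
    · rw [inf_comm, eq_bot (subset_singleton_of_ssubset_compl_singleton hab.symm hbJ ⟨hJa, hJ⟩)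
        hIb]
      exact bot_le
  · rw [eq_bot (subset_singleton_of_ssubset_compl_singleton hab haI ⟨hIb, hI⟩) hJa]
    exact bot_le

theorem intersection_property_of_rank_three (hρ : ∀ i, ρ i * ρ i = 1)
    (h02 : Commute (ρ 0) (ρ 2)) (h0 : ρ 0 ∉ closure {ρ 1, ρ 2})
    (h1 : ρ 1 ∉ closure {ρ 0, ρ 2}) (h2 : ρ 2 ∉ closure {ρ 0, ρ 1})
    (h01_12 : closure {ρ 0, ρ 1} ⊓ closure {ρ 1, ρ 2} ≤ closure {ρ 1}) (I J : Set (Fin 3)) :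
    closure (ρ '' I) ⊓ closure (ρ '' J) = closure (ρ '' (I ∩ J)) := by
  have compl0 : ρ '' {0}ᶜ = {ρ 1, ρ 2} := by
    rw [show ({0}ᶜ : Set (Fin 3)) = {1, 2} by ext x; fin_cases x <;> simp, Set.image_pair]
  have compl1 : ρ '' {1}ᶜ = {ρ 0, ρ 2} := by
    rw [show ({1}ᶜ : Set (Fin 3)) = {0, 2} by ext x; fin_cases x <;> simp, Set.image_pair]
  have compl2 : ρ '' {2}ᶜ = {ρ 0, ρ 1} := by
    rw [show ({2}ᶜ : Set (Fin 3)) = {0, 1} by ext x; fin_cases x <;> simp, Set.image_pair]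
  have h02_12 : closure {ρ 0, ρ 2} ⊓ closure {ρ 1, ρ 2} ≤ closure {ρ 2} :=
    closure_pair_inf_le_of_notMem (hρ 0) (hρ 2) h02 (subset_closure (.inr rfl)) h0
  have h02_01 : closure {ρ 0, ρ 2} ⊓ closure {ρ 0, ρ 1} ≤ closure {ρ 0} := by
    rw [Set.pair_comm]
    exact closure_pair_inf_le_of_notMem (hρ 2) (hρ 0) h02.symm (subset_closure (.inl rfl)) h2
  refine le_antisymm (inf_closure_image_le_of_rank_three ρ hρ ?_ ?_ I J)
    (le_inf (Subgroup.closure_mono (Set.image_mono Set.inter_subset_left))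
      (Subgroup.closure_mono (Set.image_mono Set.inter_subset_right)))
  · intro i
    fin_cases i
    · simpa [compl0] using h0
    · simpa [compl1] using h1
    · simpa [compl2] using h2
  · intro i j hij
    have inter : ∀ k : Fin 3, i ≠ k → j ≠ k → ρ '' ({i}ᶜ ∩ {j}ᶜ) = {ρ k} := by
      intro k hik hjk
      rw [← Set.image_singleton]
      congr 1
      ext x
      simp only [Set.mem_inter_iff, Set.mem_compl_iff, Set.mem_singleton_iff]
      omega
    fin_cases i <;> fin_cases j <;>
      simp only [Fin.reduceFinMk, Fin.isValue, ne_eq, not_true_eq_false] at hij inter ⊢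
    · rw [inter 2 (by decide) (by decide), compl0, compl1, inf_comm]; exact h02_12
    · rw [inter 1 (by decide) (by decide), compl0, compl2, inf_comm]; exact h01_12
    · rw [inter 2 (by decide) (by decide), compl1, compl0]; exact h02_12
    · rw [inter 0 (by decide) (by decide), compl1, compl2]; exact h02_01
    · rw [inter 1 (by decide) (by decide), compl2, compl0]; exact h01_12
    · rw [inter 0 (by decide) (by decide), compl2, compl1, inf_comm]; exact h02_01

theorem isStringCGroup_restrictClosure_of_rank_three
    (horder : ∀ i, orderOf (ρ i) = 2) (h02 : Commute (ρ 0) (ρ 2))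
    (h0 : ρ 0 ∉ closure {ρ 1, ρ 2}) (h1 : ρ 1 ∉ closure {ρ 0, ρ 2})
    (h2 : ρ 2 ∉ closure {ρ 0, ρ 1})
    (h01_12 : closure {ρ 0, ρ 1} ⊓ closure {ρ 1, ρ 2} ≤ closure {ρ 1}) :
    IsStringCGroup (restrictClosure ρ) := by
  have hsq : ∀ i, ρ i * ρ i = 1 := fun i => by
    have := pow_orderOf_eq_one (ρ i)
    rwa [horder, sq] at this
  refine isStringCGroup_restrictClosure ρ horder (fun i j hij => ?_)
    (intersection_property_of_rank_three ρ hsq h02 h0 h1 h2 h01_12)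
  obtain ⟨rfl, rfl⟩ | ⟨rfl, rfl⟩ : (i = 0 ∧ j = 2) ∨ (i = 2 ∧ j = 0) := by omega
  · rw [h02.mul_pow, sq, sq, hsq, hsq, one_mul]
  · rw [h02.symm.mul_pow, sq, sq, hsq, hsq, one_mul]

end RankThree

@[ext]
structure CentralExt {V A : Type*} [AddCommGroup V] [AddCommGroup A] (β : V →+ V →+ A) where
  base : V
  fiber : A

namespace CentralExt
variable {V A : Type*} [AddCommGroup V] [AddCommGroup A] {β : V →+ V →+ A}

instance : Mul (CentralExt β) := ⟨fun x y => ⟨x.base + y.base, x.fiber + y.fiber + β x.base y.base⟩⟩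
instance : One (CentralExt β) := ⟨⟨0, 0⟩⟩
instance : Inv (CentralExt β) := ⟨fun x => ⟨-x.base, -x.fiber + β x.base x.base⟩⟩

@[simp] theorem mul_base (x y : CentralExt β) : (x * y).base = x.base + y.base := rfl
@[simp] theorem mul_fiber (x y : CentralExt β) :
    (x * y).fiber = x.fiber + y.fiber + β x.base y.base := rfl
@[simp] theorem one_base : (1 : CentralExt β).base = 0 := rfl
@[simp] theorem one_fiber : (1 : CentralExt β).fiber = 0 := rfl
@[simp] theorem inv_base (x : CentralExt β) : x⁻¹.base = -x.base := rfl
@[simp] theorem inv_fiber (x : CentralExt β) : x⁻¹.fiber = -x.fiber + β x.base x.base := rfl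

instance : Group (CentralExt β) where
  mul_assoc x y z := by
    ext <;> simp only [mul_base, mul_fiber, map_add, AddMonoidHom.add_apply] <;> abel
  one_mul x := by ext <;> simp
  mul_one x := by ext <;> simp
  inv_mul_cancel x := by ext <;> simp

instance [Finite V] [Finite A] : Finite (CentralExt β) :=
  Finite.of_injective (fun x => (x.base, x.fiber)) fun _ _ h =>
    CentralExt.ext (congrArg Prod.fst h) (congrArg Prod.snd h)

/-- `hq` says that `f` preserves `β` up to the coboundary of `q`. -/
def mapEquiv (f : V ≃+ V) (q : V → A)
    (hq : ∀ v w, β (f v) (f w) + q v + q w = β v w + q (v + w)) :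
    CentralExt β ≃* CentralExt β where
  toFun x := ⟨f x.base, x.fiber + q x.base⟩
  invFun x := ⟨f.symm x.base, x.fiber - q (f.symm x.base)⟩
  left_inv x := by ext <;> simp
  right_inv x := by ext <;> simp
  map_mul' x y := by
    ext
    · simp
    · change x.fiber + y.fiber + β x.base y.base + q (x.base + y.base) =
        x.fiber + q x.base + (y.fiber + q y.base) + β (f x.base) (f y.base)
      rw [add_assoc _ (β _ _), ← hq]
      abel

end CentralExt

namespace SemidirectProduct
variable {N H : Type*} [Group N] [Group H] {φ : H →* MulAut N}

instance [Finite N] [Finite H] : Finite (N ⋊[φ] H) := Finite.of_equiv _ equivProd.symm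

theorem commute_inl_inr_iff {n : N} {h : H} : Commute (inl n : N ⋊[φ] H) (inr h) ↔ φ h n = n := by
  have : (inr h : N ⋊[φ] H) * inl n = inl (φ h n) * inr h := by
    rw [inl_aut, map_inv, inv_mul_cancel_right]
  rw [Commute, SemiconjBy, this, mul_left_inj, inl_inj, eq_comm]

theorem left_eq_of_commute_inr {g : N ⋊[φ] H} {h : H} (hg : Commute g (inr h)) :
    φ h g.left = g.left := by
  simpa using congrArg left hg.eq.symm

end SemidirectProduct

namespace ExternallySelfDual
open SemidirectProduct DihedralGroup

variable (p : ℕ)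

def precomp (e : Equiv.Perm (ZMod p)) : (ZMod p → ZMod 2) ≃+ (ZMod p → ZMod 2) :=
  (LinearEquiv.funCongrLeft (ZMod 2) (ZMod 2) e).toAddEquiv

@[simp]
theorem precomp_apply (e : Equiv.Perm (ZMod p)) (m : ZMod p → ZMod 2) (k : ZMod p) :
    precomp p e m k = m (e k) := rfl

theorem precomp_subLeft_single (i j : ZMod p) :
    precomp p (Equiv.subLeft i) (Pi.single j 1) = Pi.single (i - j) 1 := by
  ext k
  rw [precomp_apply, Equiv.subLeft_apply, Pi.single_apply, Pi.single_apply]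
  congr 1
  exact propext ⟨fun h => by rw [← h]; ring, fun h => by rw [h]; ring⟩

theorem ne_of_four_le (hp : 4 ≤ p) : (1 : ZMod p) ≠ 0 ∧ (2 : ZMod p) ≠ 0 ∧ (3 : ZMod p) ≠ 0 ∧
    (2 : ZMod p) ≠ 1 ∧ (3 : ZMod p) ≠ 1 := by
  have key : ∀ m n : ℕ, m < 4 → n < 4 → m ≠ n → (m : ZMod p) ≠ n := fun m n hm hn hmn h =>
    hmn (by rwa [ZMod.natCast_eq_natCast_iff', Nat.mod_eq_of_lt (by omega),
      Nat.mod_eq_of_lt (by omega)] at h)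
  exact ⟨mod_cast key 1 0 (by norm_num) (by norm_num) (by norm_num),
    mod_cast key 2 0 (by norm_num) (by norm_num) (by norm_num),
    mod_cast key 3 0 (by norm_num) (by norm_num) (by norm_num),
    mod_cast key 2 1 (by norm_num) (by norm_num) (by norm_num),
    mod_cast key 3 1 (by norm_num) (by norm_num) (by norm_num)⟩

variable [NeZero p]

def form : (ZMod p → ZMod 2) →+ (ZMod p → ZMod 2) →+ ZMod 2 :=
  AddMonoidHom.mk' (fun m => AddMonoidHom.mk' (fun m' => ∑ k, m k * m' (k + 2))
    fun _ _ => by simp [mul_add, Finset.sum_add_distrib])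
    fun _ _ => by ext; simp [add_mul, Finset.sum_add_distrib]

theorem form_apply (m m' : ZMod p → ZMod 2) : form p m m' = ∑ k, m k * m' (k + 2) := rfl

theorem form_precomp_addRight (i : ZMod p) (m m' : ZMod p → ZMod 2) :
    form p (precomp p (Equiv.addRight i) m) (precomp p (Equiv.addRight i) m') = form p m m' :=
  Fintype.sum_equiv (Equiv.addRight i) _ _ fun k => by simp [add_right_comm]

theorem form_precomp_subLeft (i : ZMod p) (m m' : ZMod p → ZMod 2) :
    form p (precomp p (Equiv.subLeft i) m) (precomp p (Equiv.subLeft i) m') = form p m' m :=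
  Fintype.sum_equiv (Equiv.subLeft (i - 2)) _ _ fun k => by
    simp only [precomp_apply, Equiv.subLeft_apply, mul_comm (m _)]
    ring_nf

theorem form_single_left (i : ZMod p) (m : ZMod p → ZMod 2) :
    form p (Pi.single i 1) m = m (i + 2) := by
  simp [form_apply, Pi.single_apply]

abbrev K := CentralExt (form p)

def act : DihedralGroup p → MulAut (K p)
  | r i => CentralExt.mapEquiv (precomp p (Equiv.addRight i)) 0 fun v w => by
      simp [form_precomp_addRight]
  | sr i => CentralExt.mapEquiv (precomp p (Equiv.subLeft i)) (fun v => form p v v) fun v w => by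
      -- a reflection transposes `form`; in characteristic two the transpose differs from
      -- `form` by the coboundary of `v ↦ form v v`
      simp only [form_precomp_subLeft, map_add, AddMonoidHom.add_apply]
      linear_combination -CharTwo.add_self_eq_zero (form p v w)

@[simp] theorem act_r_base (i : ZMod p) (x : K p) :
    (act p (r i) x).base = precomp p (Equiv.addRight i) x.base := rfl
@[simp] theorem act_r_fiber (i : ZMod p) (x : K p) : (act p (r i) x).fiber = x.fiber :=
  add_zero _
@[simp] theorem act_sr_base (i : ZMod p) (x : K p) :
    (act p (sr i) x).base = precomp p (Equiv.subLeft i) x.base := rfl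
@[simp] theorem act_sr_fiber (i : ZMod p) (x : K p) :
    (act p (sr i) x).fiber = x.fiber + form p x.base x.base := rfl

def θ : DihedralGroup p →* MulAut (K p) where
  toFun := act p
  map_one' := MulEquiv.ext fun x =>
    show act p (r 0) x = x from CentralExt.ext (funext fun k => congrArg x.base (add_zero k))
      (add_zero _)
  map_mul' := by
    rintro (i | i) (j | j) <;>
      refine MulEquiv.ext fun x => CentralExt.ext (funext fun k => ?_) ?_ <;>
      simp only [r_mul_r, r_mul_sr, sr_mul_r, sr_mul_sr, MulAut.mul_apply, act_r_base, act_r_fiber,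
        act_sr_base, act_sr_fiber, precomp_apply, Equiv.coe_addRight, Equiv.subLeft_apply,
        form_precomp_addRight, form_precomp_subLeft, add_assoc, CharTwo.add_self_eq_zero,
        add_zero]
    all_goals exact congrArg x.base (by ring)

@[simp] theorem θ_apply (g : DihedralGroup p) : θ p g = act p g := rfl

abbrev Γ := K p ⋊[θ p] DihedralGroup p

theorem sum_act_base (g : DihedralGroup p) (x : K p) :
    ∑ k, (act p g x).base k = ∑ k, x.base k := by
  cases g with
  | r i => exact Equiv.sum_comp (Equiv.addRight i) x.base
  | sr i => exact Equiv.sum_comp (Equiv.subLeft i) x.base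

def parity : Γ p →* Multiplicative (ZMod 2) where
  toFun g := Multiplicative.ofAdd (∑ k, g.left.base k)
  map_one' := by simp
  map_mul' g h := by simp [Finset.sum_add_distrib, sum_act_base, ofAdd_add]

theorem parity_apply (g : Γ p) : parity p g = Multiplicative.ofAdd (∑ k, g.left.base k) := rfl

def single0 : K p := ⟨Pi.single 0 1, 0⟩

def single01 : K p := ⟨Pi.single 0 1 + Pi.single 1 1, 0⟩

def dualizer : Γ p := inl (single0 p)

def ρ : Fin 3 → Γ p := ![inr (sr 1), inr (sr 0), dualizer p * inr (sr 1) * (dualizer p)⁻¹]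

theorem eq_one_or_eq_sr_zero_of_act_eq (g : DihedralGroup p)
    (hg : act p g (single0 p) = single0 p) : g = 1 ∨ g = sr 0 := by
  have h0 := congrFun (congrArg CentralExt.base hg) 0
  cases g with
  | r i =>
    left
    have : i = 0 := by simpa [single0, Pi.single_apply] using h0
    rw [this, r_zero]
  | sr i => right; simpa [single0, Pi.single_apply] using h0

variable {p}

theorem single0_mul_self (hp : 4 ≤ p) : single0 p * single0 p = 1 := by
  obtain ⟨-, h20, -⟩ := ne_of_four_le p hp
  ext <;> simp [single0, form_single_left, h20, CharTwo.add_self_eq_zero]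

theorem dualizer_mul_self (hp : 4 ≤ p) : dualizer p * dualizer p = 1 := by
  rw [dualizer, ← map_mul, single0_mul_self hp, map_one]

theorem commute_dualizer_ρ_one (hp : 4 ≤ p) : Commute (dualizer p) (ρ p 1) := by
  obtain ⟨-, h20, -⟩ := ne_of_four_le p hp
  refine commute_inl_inr_iff.2 (CentralExt.ext ?_ ?_)
  · simp [single0, precomp_subLeft_single]
  · simp [single0, form_single_left, h20]

theorem isDualizing_dualizer (hp : 4 ≤ p) : IsDualizing (ρ p) (dualizer p) := by
  have hinv : (dualizer p)⁻¹ = dualizer p := inv_eq_of_mul_eq_one_right (dualizer_mul_self hp)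
  intro i
  fin_cases i
  · rfl
  · show dualizer p * ρ p 1 * (dualizer p)⁻¹ = ρ p 1
    rw [(commute_dualizer_ρ_one hp).eq, mul_inv_cancel_right]
  · show dualizer p * (dualizer p * ρ p 0 * (dualizer p)⁻¹) * (dualizer p)⁻¹ = ρ p 0
    simp only [hinv, ← mul_assoc, dualizer_mul_self hp, one_mul]
    rw [mul_assoc, dualizer_mul_self hp, mul_one]

theorem orderOf_ρ (i : Fin 3) : orderOf (ρ p i) = 2 := by
  fin_cases i
  · exact (orderOf_injective _ inr_injective _).trans (orderOf_sr 1)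
  · exact (orderOf_injective _ inr_injective _).trans (orderOf_sr 0)
  · exact (MulEquiv.orderOf_eq (MulAut.conj (dualizer p)) (ρ p 0)).trans
      ((orderOf_injective _ inr_injective _).trans (orderOf_sr 1))

theorem ρ_mul_self (i : Fin 3) : ρ p i * ρ p i = 1 := by
  have := pow_orderOf_eq_one (ρ p i)
  rwa [orderOf_ρ, sq] at this

theorem ρ_zero_mul_ρ_one : ρ p 0 * ρ p 1 = (inr (r 1))⁻¹ := by
  simp [ρ, ← map_mul, ← map_inv]

theorem ρ_one_mul_ρ_zero : ρ p 1 * ρ p 0 = inr (r 1) := by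
  simp [ρ, ← map_mul]

theorem orderOf_ρ_zero_mul_ρ_one : orderOf (ρ p 0 * ρ p 1) = p := by
  rw [ρ_zero_mul_ρ_one, orderOf_inv, orderOf_injective _ inr_injective, orderOf_r_one]

theorem orderOf_ρ_one_mul_ρ_two (hp : 4 ≤ p) : orderOf (ρ p 1 * ρ p 2) = p := by
  have h : ρ p 1 * ρ p 2 = MulAut.conj (dualizer p) (ρ p 1 * ρ p 0) := by
    rw [map_mul, MulAut.conj_apply, MulAut.conj_apply, isDualizing_dualizer hp 1,
      isDualizing_dualizer hp 0]
    rfl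
  rw [h, MulEquiv.orderOf_eq, ρ_one_mul_ρ_zero, orderOf_injective _ inr_injective, orderOf_r_one]

theorem ρ_two_eq (hp : 4 ≤ p) : ρ p 2 = inl (single01 p) * ρ p 0 := by
  obtain ⟨-, h20, -, h21, -⟩ := ne_of_four_le p hp
  have hinv : (single0 p)⁻¹ = single0 p := inv_eq_of_mul_eq_one_right (single0_mul_self hp)
  have hx : single0 p * act p (sr 1) (single0 p)⁻¹ = single01 p := by
    rw [hinv]
    ext
    · simp [single0, single01, precomp_subLeft_single]
    · simp [single0, single01, precomp_subLeft_single, form_single_left, h20, h21]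
  rw [← hx, map_mul, ← θ_apply, inl_aut, map_inv, map_inv]
  show inl (single0 p) * inr (sr 1) * (inl (single0 p))⁻¹ = _ * (_ * _ * _) * inr (sr 1)
  group

theorem commute_ρ_zero_ρ_two (hp : 4 ≤ p) : Commute (ρ p 0) (ρ p 2) := by
  obtain ⟨-, h20, h30, h21, -⟩ := ne_of_four_le p hp
  have hc : act p (sr 1) (single01 p) = single01 p := by
    have h3 : (1 : ZMod p) + 2 ≠ 0 := by rwa [show (1 : ZMod p) + 2 = 3 by norm_num]
    ext
    · rw [act_sr_base, single01, map_add, precomp_subLeft_single, precomp_subLeft_single, sub_zero,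
        sub_self, add_comm]
    · simp [single01, form_single_left, h20, h3, h21]
  rw [ρ_two_eq hp]
  exact (commute_inl_inr_iff.2 hc).symm.mul_right (Commute.refl _)

theorem closure_ρ_zero_ρ_one_le : closure {ρ p 0, ρ p 1} ≤ (inr : DihedralGroup p →* Γ p).range :=
  (closure_le _).2 (by rintro _ (rfl | rfl) <;> exact ⟨_, rfl⟩)

theorem closure_ρ_one_ρ_two_eq (hp : 4 ≤ p) :
    closure {ρ p 1, ρ p 2} =
      (closure {ρ p 0, ρ p 1}).map (MulAut.conj (dualizer p)).toMonoidHom := by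
  rw [MonoidHom.map_closure, Set.image_pair]
  simp only [MulEquiv.coe_toMonoidHom, MulAut.conj_apply]
  rw [isDualizing_dualizer hp 0, isDualizing_dualizer hp 1, Set.pair_comm]
  rfl

theorem ρ_two_notMem (hp : 4 ≤ p) : ρ p 2 ∉ closure {ρ p 0, ρ p 1} := by
  obtain ⟨h10, -⟩ := ne_of_four_le p hp
  rintro h
  obtain ⟨g, hg⟩ := closure_ρ_zero_ρ_one_le h
  rw [ρ_two_eq hp] at hg
  have := congrArg (fun x => (left x).base 0) hg
  simp [ρ, single01, h10] at this

theorem ρ_zero_notMem (hp : 4 ≤ p) : ρ p 0 ∉ closure {ρ p 1, ρ p 2} := by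
  intro h
  rw [closure_ρ_one_ρ_two_eq hp, mem_map_equiv] at h
  have : (MulAut.conj (dualizer p)).symm (ρ p 0) = ρ p 2 :=
    (MulEquiv.symm_apply_eq _).2 (isDualizing_dualizer hp 2).symm
  exact ρ_two_notMem hp (this ▸ h)

theorem ρ_one_notMem (hp : 4 ≤ p) : ρ p 1 ∉ closure {ρ p 0, ρ p 2} := by
  obtain ⟨h10, -⟩ := ne_of_four_le p hp
  intro h
  rcases (mem_closure_pair_of_commute (ρ_mul_self 0) (ρ_mul_self 2)
    (commute_ρ_zero_ρ_two hp)).1 h with h | h | h | h <;>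
    have := congrArg right h <;> simp [ρ, dualizer, h10.symm, one_def, -r_zero] at this

theorem inf_closure_le_closure_ρ_one (hp : 4 ≤ p) :
    closure {ρ p 0, ρ p 1} ⊓ closure {ρ p 1, ρ p 2} ≤ closure {ρ p 1} := by
  intro x hx
  obtain ⟨hx01, hx12⟩ := mem_inf.1 hx
  obtain ⟨g, rfl⟩ := closure_ρ_zero_ρ_one_le hx01
  rw [closure_ρ_one_ρ_two_eq hp] at hx12
  obtain ⟨y, hy, hyx⟩ := hx12
  obtain ⟨g', rfl⟩ := closure_ρ_zero_ρ_one_le hy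
  have hg : g' = g := by simpa [dualizer] using congrArg right hyx
  subst hg
  have hcomm : Commute (dualizer p) (inr g') := mul_inv_eq_iff_eq_mul.1 hyx
  rcases eq_one_or_eq_sr_zero_of_act_eq p g' (commute_inl_inr_iff.1 hcomm) with rfl | rfl
  · rw [map_one]; exact one_mem _
  · exact subset_closure rfl

theorem closure_range_ρ_le_ker_parity : closure (Set.range (ρ p)) ≤ (parity p).ker := by
  rw [closure_le]
  rintro _ ⟨i, rfl⟩
  fin_cases i
  · simp [ρ, parity]
  · simp [ρ, parity]
  · show parity p (dualizer p * ρ p 0 * (dualizer p)⁻¹) = 1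
    rw [map_mul, map_mul, map_inv, mul_inv_cancel_comm]
    simp [ρ, parity]

theorem not_isDualizing (hp : 4 ≤ p) {α : Γ p} (hα : parity p α = 1) : ¬IsDualizing (ρ p) α := by
  intro hdual
  set z := (dualizer p)⁻¹ * α with hz
  have hcomm := (isDualizing_dualizer hp).commute_inv_mul hdual
  have hrot : act p (r 1) z.left = z.left :=
    left_eq_of_commute_inr (ρ_one_mul_ρ_zero (p := p) ▸ (hcomm 1).mul_right (hcomm 0))
  have hrefl : act p (sr 0) z.left = z.left := left_eq_of_commute_inr (hcomm 1)
  have hconst : ∀ k, z.left.base k = z.left.base 0 := by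
    have hper : Function.Periodic z.left.base 1 := fun k =>
      congrFun (congrArg CentralExt.base hrot) k
    intro k
    simpa using (hper.nat_mul k.val) 0
  have hbase : z.left.base = fun _ => z.left.base 0 := funext hconst
  have hform : (p : ZMod 2) * (z.left.base 0 * z.left.base 0) = 0 := by
    have := congrArg CentralExt.fiber hrefl
    rw [act_sr_fiber, add_eq_left, form_apply, hbase] at this
    simpa using this
  have hparity : 1 + (p : ZMod 2) * z.left.base 0 = 0 := by
    rw [show α = dualizer p * z by rw [hz, mul_inv_cancel_left], map_mul, parity_apply,
      parity_apply, hbase] at hα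
    simpa [dualizer, single0, ← ofAdd_add] using hα
  generalize (p : ZMod 2) = a, z.left.base 0 = e at hform hparity
  revert a e
  decide

end ExternallySelfDual

open ExternallySelfDual in
/-- For every integer `p ≥ 4` there is a finite string C-group of rank 3 of type
`{p, p}` that is externally self-dual: it admits a group automorphism sending each
`ρ i` to `ρ (2 - i)`, but admits no dualizing element. -/
theorem exists_externally_self_dual_of_type_pp (p : ℕ) (hp : 4 ≤ p) :
    ∃ (G : Type) (_ : Group G) (_ : Finite G) (ρ : Fin 3 → G),
      IsStringCGroup ρ ∧ orderOf (ρ 0 * ρ 1) = p ∧ orderOf (ρ 1 * ρ 2) = p ∧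
        (∃ d : G ≃* G, ∀ i : Fin 3, d (ρ i) = ρ i.rev) ∧
        ¬∃ α : G, IsDualizing ρ α := by
  have : NeZero p := ⟨by omega⟩
  refine ⟨closure (Set.range (ρ p)), inferInstance, inferInstance, restrictClosure (ρ p),
    isStringCGroup_restrictClosure_of_rank_three _ orderOf_ρ (commute_ρ_zero_ρ_two hp)
      (ρ_zero_notMem hp) (ρ_one_notMem hp) (ρ_two_notMem hp) (inf_closure_le_closure_ρ_one hp),
    ?_, ?_, exists_mulEquiv_restrictClosure_rev _ (MulAut.conj (dualizer p))
      (isDualizing_dualizer hp), ?_⟩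
  · rw [← orderOf_submonoid]; exact orderOf_ρ_zero_mul_ρ_one
  · rw [← orderOf_submonoid]; exact orderOf_ρ_one_mul_ρ_two hp
  · rintro ⟨α, hα⟩
    exact not_isDualizing hp (closure_range_ρ_le_ker_parity α.2) hα.of_restrictClosure
end

section
/- Let p ≥ 3 be an integer and let G be a group generated by two elements ρ₀, ρ₁, each of order 2, such that ρ₀ρ₁ has order p. Then there exists α ∈ G with αρ₀α⁻¹ = ρ₁ and αρ₁α⁻¹ = ρ₀ if and only if p is odd. (The p-gon {p} is internally self-dual if and only if p is odd.) -/
/-!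
Write `r = ρ₀ * ρ₁`. Since `ρ₀` and `ρ₁` are involutions, every element of `G` is a rotation `rᵏ`
or a reflection `rᵏ * ρ₀`, and conjugating `ρ₀` by either gives `r ^ (2 * k) * ρ₀`. As
`ρ₁ = r⁻¹ * ρ₀`, the involution `ρ₀` is conjugate to `ρ₁` exactly when `r ^ (2 * k + 1) = 1` for
some `k`, i.e. when the order of `r` is odd. For `p = 2 * m + 1` the reflection `r ^ m * ρ₀` does
the job; being an involution, it swaps `ρ₀` and `ρ₁` as soon as it sends `ρ₀` to `ρ₁`.
-/

namespace InvolutionPair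

variable {G : Type*} [Group G] {a b : G}

theorem mul_inv_mul_eq (hb : b * b = 1) : (a * b)⁻¹ * a = b := by
  rw [mul_inv_rev, inv_eq_of_mul_eq_one_right hb, inv_mul_cancel_right]

theorem mul_zpow_eq_zpow_neg_mul (ha : a * a = 1) (hb : b * b = 1) (k : ℤ) :
    a * (a * b) ^ k = (a * b) ^ (-k) * a := by
  have hconj : a * (a * b) * a⁻¹ = (a * b)⁻¹ := by
    rw [mul_inv_rev, inv_eq_of_mul_eq_one_right ha, inv_eq_of_mul_eq_one_right hb,
      ← mul_assoc, ha, one_mul]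
  rw [← mul_inv_eq_iff_eq_mul, ← conj_zpow, hconj, inv_zpow']

theorem zpow_mul_mul_self_eq_one (ha : a * a = 1) (hb : b * b = 1) (k : ℤ) :
    (a * b) ^ k * a * ((a * b) ^ k * a) = 1 := by
  rw [mul_assoc, ← mul_assoc a, mul_zpow_eq_zpow_neg_mul ha hb, mul_assoc, ha, mul_one,
    ← zpow_add, add_neg_cancel, zpow_zero]

theorem zpow_conj_eq (ha : a * a = 1) (hb : b * b = 1) (k : ℤ) :
    (a * b) ^ k * a * ((a * b) ^ k)⁻¹ = (a * b) ^ (2 * k) * a := by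
  rw [← zpow_neg, mul_assoc, mul_zpow_eq_zpow_neg_mul ha hb, neg_neg, ← mul_assoc, ← zpow_add,
    two_mul]

theorem zpow_mul_conj_eq (ha : a * a = 1) (hb : b * b = 1) (k : ℤ) :
    (a * b) ^ k * a * a * ((a * b) ^ k * a)⁻¹ = (a * b) ^ (2 * k) * a := by
  rw [inv_eq_of_mul_eq_one_right (zpow_mul_mul_self_eq_one ha hb k), mul_assoc _ a a, ha,
    mul_one, ← mul_assoc, ← zpow_add, two_mul]

theorem exists_eq_zpow_or_eq_zpow_mul_of_mem_closure (ha : a * a = 1) (hb : b * b = 1) {g : G}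
    (hg : g ∈ Subgroup.closure {a, b}) : ∃ k : ℤ, g = (a * b) ^ k ∨ g = (a * b) ^ k * a := by
  have step : ∀ g y, y ∈ ({a, b} : Set G) → (∃ k : ℤ, g = (a * b) ^ k ∨ g = (a * b) ^ k * a) →
      ∃ k : ℤ, g * y = (a * b) ^ k ∨ g * y = (a * b) ^ k * a := by
    rintro g y (rfl | rfl) ⟨k, rfl | rfl⟩
    · exact ⟨k, .inr rfl⟩
    · exact ⟨k, .inl (by rw [mul_assoc, ha, mul_one])⟩
    · refine ⟨k - 1, .inr ?_⟩
      rw [zpow_sub_one, mul_assoc, mul_inv_mul_eq hb]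
    · exact ⟨k + 1, .inl (by rw [zpow_add_one, mul_assoc])⟩
  induction hg using Subgroup.closure_induction_right with
  | one => exact ⟨0, .inl (zpow_zero _).symm⟩
  | mul_right g _ y hy ih => exact step g y hy ih
  | mul_inv_cancel g _ y hy ih =>
    have hy' : y⁻¹ = y := by
      rcases hy with rfl | rfl
      exacts [inv_eq_of_mul_eq_one_right ha, inv_eq_of_mul_eq_one_right hb]
    rw [hy']
    exact step g y hy ih

theorem exists_conj_eq_zpow_mul_of_mem_closure (ha : a * a = 1) (hb : b * b = 1) {g : G}
    (hg : g ∈ Subgroup.closure {a, b}) : ∃ k : ℤ, g * a * g⁻¹ = (a * b) ^ (2 * k) * a := by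
  obtain ⟨k, rfl | rfl⟩ := exists_eq_zpow_or_eq_zpow_mul_of_mem_closure ha hb hg
  exacts [⟨k, zpow_conj_eq ha hb k⟩, ⟨k, zpow_mul_conj_eq ha hb k⟩]

theorem odd_orderOf_mul_of_conj_eq (ha : a * a = 1) (hb : b * b = 1) {g : G}
    (hg : g ∈ Subgroup.closure {a, b}) (hconj : g * a * g⁻¹ = b) : Odd (orderOf (a * b)) := by
  obtain ⟨k, hk⟩ := exists_conj_eq_zpow_mul_of_mem_closure ha hb hg
  have hpow : (a * b) ^ (2 * k + 1) = 1 := by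
    rw [zpow_add_one, ← mul_assoc, ← hk, hconj, hb]
  exact (odd_two_mul_add_one k).natAbs.of_dvd_nat
    (Int.natCast_dvd.mp (orderOf_dvd_iff_zpow_eq_one.mpr hpow))

theorem exists_conj_swap_of_odd_orderOf (ha : a * a = 1) (hb : b * b = 1)
    (hodd : Odd (orderOf (a * b))) : ∃ g : G, g * a * g⁻¹ = b ∧ g * b * g⁻¹ = a := by
  obtain ⟨m, hm⟩ := hodd
  have hrot : (a * b) ^ (2 * (m : ℤ)) = (a * b)⁻¹ := by
    refine eq_inv_of_mul_eq_one_left ?_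
    rw [← zpow_add_one, ← pow_orderOf_eq_one (a * b), hm]
    norm_cast
  have hab : (a * b) ^ (m : ℤ) * a * a * ((a * b) ^ (m : ℤ) * a)⁻¹ = b := by
    rw [zpow_mul_conj_eq ha hb, hrot, mul_inv_mul_eq hb]
  have hgg := zpow_mul_mul_self_eq_one ha hb m
  set g := (a * b) ^ (m : ℤ) * a
  refine ⟨g, hab, ?_⟩
  rw [← hab, inv_eq_of_mul_eq_one_right hgg]
  calc g * (g * a * g) * g = g * g * a * (g * g) := by simp only [mul_assoc]
    _ = a := by rw [hgg, one_mul, mul_one]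

end InvolutionPair

theorem pgon_internally_self_dual_iff_odd_general (p : ℕ)
    {G : Type*} [Group G] (ρ₀ ρ₁ : G)
    (hgen : Subgroup.closure {ρ₀, ρ₁} = ⊤)
    (h₀ : orderOf ρ₀ = 2) (h₁ : orderOf ρ₁ = 2)
    (hprod : orderOf (ρ₀ * ρ₁) = p) :
    (∃ α : G, α * ρ₀ * α⁻¹ = ρ₁ ∧ α * ρ₁ * α⁻¹ = ρ₀) ↔ Odd p := by
  have hρ₀ : ρ₀ * ρ₀ = 1 := by rw [← sq, ← h₀, pow_orderOf_eq_one]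
  have hρ₁ : ρ₁ * ρ₁ = 1 := by rw [← sq, ← h₁, pow_orderOf_eq_one]
  rw [← hprod]
  constructor
  · rintro ⟨α, hα, -⟩
    exact InvolutionPair.odd_orderOf_mul_of_conj_eq hρ₀ hρ₁ (hgen ▸ Subgroup.mem_top α) hα
  · exact InvolutionPair.exists_conj_swap_of_odd_orderOf hρ₀ hρ₁

/-- In a dihedral-type group generated by two involutions `ρ₀, ρ₁` whose product has
order `p ≥ 3`, there is an element conjugating `ρ₀` to `ρ₁` and `ρ₁` to `ρ₀` if and
only if `p` is odd.  (The `p`-gon is internally self-dual iff `p` is odd.) -/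
theorem pgon_internally_self_dual_iff_odd (p : ℕ) (hp : 3 ≤ p)
    {G : Type*} [Group G] (ρ₀ ρ₁ : G)
    (hgen : Subgroup.closure {ρ₀, ρ₁} = ⊤)
    (h₀ : orderOf ρ₀ = 2) (h₁ : orderOf ρ₁ = 2)
    (hprod : orderOf (ρ₀ * ρ₁) = p) :
    (∃ α : G, α * ρ₀ * α⁻¹ = ρ₁ ∧ α * ρ₁ * α⁻¹ = ρ₀) ↔ Odd p :=
  pgon_internally_self_dual_iff_odd_general p ρ₀ ρ₁ hgen h₀ h₁ hprod
end

section
/- Let s ≥ 2 be an integer. In the group of permutations of (ZMod s) × (ZMod s), define ρ₀ : (x, y) ↦ (1 − x, y), ρ₁ : (x, y) ↦ (y, x), and ρ₂ : (x, y) ↦ (x, −y), and let G be the subgroup generated by ρ₀, ρ₁, ρ₂. Then there exists α ∈ G with αρ₀α⁻¹ = ρ₂, αρ₁α⁻¹ = ρ₁, and αρ₂α⁻¹ = ρ₀ if and only if s is odd. (The toroidal polyhedron {4,4}_{(s,0)} is internally self-dual if and only if s is odd.) -/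
/-- The generator `ρ₀ : (x, y) ↦ (1 - x, y)` of the toroidal map `{4,4}_{(s,0)}`. -/
def torusRho0 (s : ℕ) : Equiv.Perm (ZMod s × ZMod s) :=
  Function.Involutive.toPerm (fun q => (1 - q.1, q.2)) (by
    intro q
    simp [sub_sub_cancel])

/-- The generator `ρ₁ : (x, y) ↦ (y, x)` of the toroidal map `{4,4}_{(s,0)}`. -/
def torusRho1 (s : ℕ) : Equiv.Perm (ZMod s × ZMod s) :=
  Equiv.prodComm (ZMod s) (ZMod s)

/-- The generator `ρ₂ : (x, y) ↦ (x, -y)` of the toroidal map `{4,4}_{(s,0)}`. -/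
def torusRho2 (s : ℕ) : Equiv.Perm (ZMod s × ZMod s) :=
  Function.Involutive.toPerm (fun q => (q.1, -q.2)) (by
    intro q
    simp)


/-!
A dualizing `α` conjugates `ρ₂`, which fixes `(0, 0)`, to `ρ₀`, so `ρ₀` has a fixed point,
i.e. `2 x = 1` is solvable in `ZMod s`, which forces `s` odd. Conversely, if `2 u = 1`, the
reflection `(x, y) ↦ (u - y, u - x)` in the line `x + y = u` swaps `ρ₀` (the reflection in
`x = u`) with `ρ₂` and commutes with `ρ₁`; it lies in the group because `ρ₀ ρ₁ ρ₂ ρ₁` is the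
translation by `(1, 0)`, so the group contains every translation.
-/

lemma ZMod.isUnit_two_iff_odd {s : ℕ} : IsUnit (2 : ZMod s) ↔ Odd s := by
  rw [← Nat.cast_ofNat, ZMod.isUnit_iff_coprime, Nat.coprime_two_left]

namespace Torus44

variable {s : ℕ}

def torusGroup (s : ℕ) : Subgroup (Equiv.Perm (ZMod s × ZMod s)) :=
  Subgroup.closure {torusRho0 s, torusRho1 s, torusRho2 s}

lemma torusRho0_mem : torusRho0 s ∈ torusGroup s := Subgroup.subset_closure (by simp)
lemma torusRho1_mem : torusRho1 s ∈ torusGroup s := Subgroup.subset_closure (by simp)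
lemma torusRho2_mem : torusRho2 s ∈ torusGroup s := Subgroup.subset_closure (by simp)

@[simp] lemma torusRho0_apply (q : ZMod s × ZMod s) : torusRho0 s q = (1 - q.1, q.2) := rfl
@[simp] lemma torusRho1_apply (q : ZMod s × ZMod s) : torusRho1 s q = (q.2, q.1) := rfl
@[simp] lemma torusRho2_apply (q : ZMod s × ZMod s) : torusRho2 s q = (q.1, -q.2) := rfl

lemma torusRho0_apply_eq_self_iff (q : ZMod s × ZMod s) : torusRho0 s q = q ↔ 2 * q.1 = 1 := by
  rw [torusRho0_apply, Prod.ext_iff]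
  constructor
  · rintro ⟨h, -⟩; linear_combination -h
  · intro h; exact ⟨by linear_combination -h, rfl⟩

lemma addRight_one_zero :
    Equiv.addRight ((1, 0) : ZMod s × ZMod s) =
      torusRho0 s * (torusRho1 s * torusRho2 s * torusRho1 s) := by
  ext q <;> simp [sub_neg_eq_add, add_comm]

lemma addRight_zero_one :
    Equiv.addRight ((0, 1) : ZMod s × ZMod s) =
      torusRho1 s * Equiv.addRight (1, 0) * torusRho1 s := by
  ext q <;> simp

lemma addRight_mem_torusGroup (v : ZMod s × ZMod s) : Equiv.addRight v ∈ torusGroup s := by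
  have e1 : Equiv.addRight ((1, 0) : ZMod s × ZMod s) ∈ torusGroup s := by
    rw [addRight_one_zero]
    exact mul_mem torusRho0_mem (mul_mem (mul_mem torusRho1_mem torusRho2_mem) torusRho1_mem)
  have e2 : Equiv.addRight ((0, 1) : ZMod s × ZMod s) ∈ torusGroup s := by
    rw [addRight_zero_one]; exact mul_mem (mul_mem torusRho1_mem e1) torusRho1_mem
  have hv : v = (v.1.cast : ℤ) • ((1, 0) : ZMod s × ZMod s) + (v.2.cast : ℤ) • (0, 1) := by
    ext <;> simp
  rw [hv, Equiv.addRight_add, ← Equiv.zsmul_addRight, ← Equiv.zsmul_addRight]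
  exact mul_mem (zpow_mem e2 _) (zpow_mem e1 _)

def dualizer (u : ZMod s) : Equiv.Perm (ZMod s × ZMod s) :=
  Equiv.addRight (u, u) * (torusRho2 s * torusRho1 s * torusRho2 s)

@[simp] lemma dualizer_apply (u : ZMod s) (q : ZMod s × ZMod s) :
    dualizer u q = (u - q.2, u - q.1) := by
  ext <;> simp [dualizer, neg_add_eq_sub]

lemma dualizer_mem_torusGroup (u : ZMod s) : dualizer u ∈ torusGroup s :=
  mul_mem (addRight_mem_torusGroup _)
    (mul_mem (mul_mem torusRho2_mem torusRho1_mem) torusRho2_mem)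

lemma isUnit_two_of_conj_torusRho0 {α : Equiv.Perm (ZMod s × ZMod s)}
    (hα : α * torusRho0 s * α⁻¹ = torusRho2 s) : IsUnit (2 : ZMod s) := by
  have hcomm : α * torusRho0 s = torusRho2 s * α := mul_inv_eq_iff_eq_mul.mp hα
  have hfix : torusRho0 s (α⁻¹ 0) = α⁻¹ 0 := by
    apply α.injective
    rw [← Equiv.Perm.mul_apply, hcomm]
    simp
  exact .of_mul_eq_one _ ((torusRho0_apply_eq_self_iff _).mp hfix)

lemma dualizer_intertwines (u : ZMod s) (hu : 2 * u = 1) :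
    dualizer u * torusRho0 s = torusRho2 s * dualizer u ∧
    dualizer u * torusRho1 s = torusRho1 s * dualizer u ∧
    dualizer u * torusRho2 s = torusRho0 s * dualizer u := by
  refine ⟨?_, ?_, ?_⟩ <;> ext q <;> simp <;> linear_combination hu

end Torus44

open Torus44 in
theorem torus44_internally_self_dual_iff_odd_general (s : ℕ) :
    (∃ α ∈ Subgroup.closure {torusRho0 s, torusRho1 s, torusRho2 s},
      α * torusRho0 s * α⁻¹ = torusRho2 s ∧
      α * torusRho1 s * α⁻¹ = torusRho1 s ∧
      α * torusRho2 s * α⁻¹ = torusRho0 s) ↔ Odd s := by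
  constructor
  · rintro ⟨α, -, hα, -, -⟩
    exact ZMod.isUnit_two_iff_odd.mp (isUnit_two_of_conj_torusRho0 hα)
  · intro hs
    obtain ⟨u, hu⟩ := (ZMod.isUnit_two_iff_odd.mpr hs).exists_right_inv
    obtain ⟨h0, h1, h2⟩ := dualizer_intertwines u hu
    exact ⟨dualizer u, dualizer_mem_torusGroup u, mul_inv_eq_iff_eq_mul.mpr h0,
      mul_inv_eq_iff_eq_mul.mpr h1, mul_inv_eq_iff_eq_mul.mpr h2⟩

/-- The toroidal polyhedron `{4,4}_{(s,0)}` is internally self-dual iff `s` is odd: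
the group generated by `ρ₀, ρ₁, ρ₂` contains an element conjugating `ρ₀` to `ρ₂`,
`ρ₁` to `ρ₁` and `ρ₂` to `ρ₀` if and only if `s` is odd. -/
theorem torus44_internally_self_dual_iff_odd (s : ℕ) (hs : 2 ≤ s) :
    (∃ α ∈ Subgroup.closure {torusRho0 s, torusRho1 s, torusRho2 s},
      α * torusRho0 s * α⁻¹ = torusRho2 s ∧
      α * torusRho1 s * α⁻¹ = torusRho1 s ∧
      α * torusRho2 s * α⁻¹ = torusRho0 s) ↔ Odd s :=
  torus44_internally_self_dual_iff_odd_general s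
end

section
/- Let n ≥ 2 and s ≥ 2 be integers. In the group of permutations of (ZMod s)ⁿ, define ρ₀ : (x₁, …, xₙ) ↦ (1 − x₁, x₂, …, xₙ), ρᵢ (for 1 ≤ i ≤ n − 1) to be the permutation interchanging coordinates xᵢ and x_{i+1}, and ρₙ : (x₁, …, xₙ) ↦ (x₁, …, x_{n−1}, −xₙ), and let G be the subgroup generated by ρ₀, …, ρₙ. Then there exists α ∈ G with αρᵢα⁻¹ = ρ_{n−i} for all 0 ≤ i ≤ n if and only if s is odd. (The cubic toroid {4, 3^{n−2}, 4}_{(s,0^{n−1})}, an (n+1)-polytope, is internally self-dual if and only if s is odd.) -/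
/-- The permutation of `Fin n → ZMod s` replacing the coordinate at `k` by `1 -` it. -/
def affineFlip (n s : ℕ) (k : Fin n) : Equiv.Perm (Fin n → ZMod s) :=
  Function.Involutive.toPerm (fun x => Function.update x k (1 - x k)) (by
    intro x
    simp [Function.update_idem, sub_sub_cancel])

/-- The permutation of `Fin n → ZMod s` negating the coordinate at `k`. -/
def negFlip (n s : ℕ) (k : Fin n) : Equiv.Perm (Fin n → ZMod s) :=
  Function.Involutive.toPerm (fun x => Function.update x k (-(x k))) (by
    intro x
    simp [Function.update_idem])

/-- The permutation of `Fin n → ZMod s` interchanging the coordinates at `a` and `b`. -/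
def swapCoords (n s : ℕ) (a b : Fin n) : Equiv.Perm (Fin n → ZMod s) :=
  (Equiv.swap a b).arrowCongr (Equiv.refl (ZMod s))

/-- The distinguished generators `ρ₀, …, ρₙ` of the cubic toroid
`{4, 3^{n-2}, 4}_{(s,0^{n-1})}` acting on its vertex set `(ZMod s)ⁿ`:
`ρ₀` sends `x₁` to `1 - x₁`, `ρᵢ` (for `1 ≤ i ≤ n - 1`) interchanges `xᵢ` and
`x_{i+1}`, and `ρₙ` negates `xₙ`. -/
def cubicToroidGen (n s : ℕ) (hn : 0 < n) (i : Fin (n + 1)) :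
    Equiv.Perm (Fin n → ZMod s) :=
  if h0 : (i : ℕ) = 0 then affineFlip n s ⟨0, hn⟩
  else if htop : (i : ℕ) = n then negFlip n s ⟨n - 1, by omega⟩
  else
    swapCoords n s ⟨(i : ℕ) - 1, by omega⟩ ⟨(i : ℕ), by have := i.isLt; omega⟩


/-!
All generators are built from coordinate transpositions and the one-coordinate reflections
`t ↦ 1 - t` and `t ↦ -t`. A dualizing `α` carries `ρₙ`, which fixes the origin, to `ρ₀`, so `ρ₀`
has a fixed point; its first coordinate solves `2y = 1` in `ZMod s`, forcing `s` odd. Conversely,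
if `2c = 1` then `x ↦ (c - x_{n+1-i})ᵢ`, the point reflection through `(c, …, c)` composed with the
reversal of coordinates, dualizes: conjugating by it reverses the transpositions and turns the
reflection `t ↦ 1 - t` into `t ↦ 2c - 1 - t = -t` and back. It lies in the group because the
generators give every permutation of the coordinates and, in each coordinate, every reflection
`t ↦ a - t`, since `t ↦ 1 - t` and `t ↦ -t` compose to the translation by `1`.
-/

open Equiv

section CoordinatePermutations

variable {ι β : Type*}

def coordwisePerm : (ι → Perm β) →* Perm (ι → β) where
  toFun := Equiv.piCongrRight
  map_one' := rfl
  map_mul' _ _ := rfl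

def permuteCoords : Perm ι →* Perm (ι → β) where
  toFun p := p.arrowCongr (Equiv.refl β)
  map_one' := rfl
  map_mul' _ _ := rfl

@[simp]
theorem coordwisePerm_apply (g : ι → Perm β) (x : ι → β) (i : ι) :
    coordwisePerm g x i = g i (x i) := rfl

@[simp]
theorem permuteCoords_apply (p : Perm ι) (x : ι → β) (i : ι) :
    permuteCoords p x i = x (p.symm i) := rfl

@[simp]
theorem coordwisePerm_symm_apply (g : ι → Perm β) (x : ι → β) (i : ι) :
    (coordwisePerm g).symm x i = (g i).symm (x i) := rfl

@[simp]
theorem permuteCoords_symm_apply (p : Perm ι) (x : ι → β) (i : ι) :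
    (permuteCoords p).symm x i = x (p i) := rfl

theorem permuteCoords_conj_coordwisePerm_mulSingle [DecidableEq ι] (p : Perm ι) (k : ι)
    (f : Perm β) :
    permuteCoords p * coordwisePerm (Pi.mulSingle k f) * (permuteCoords p)⁻¹ =
      coordwisePerm (Pi.mulSingle (p k) f) := by
  ext x i
  simp [Pi.mulSingle_apply, ← map_inv, Perm.mul_apply, Perm.inv_def, symm_apply_eq]

end CoordinatePermutations

namespace Equiv

variable {A : Type*} [AddCommGroup A]

theorem subLeft_mul_subLeft (a b : A) :
    Equiv.subLeft a * Equiv.subLeft b = Equiv.addLeft (a - b) := by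
  ext x
  simp only [Perm.mul_apply, subLeft_apply, coe_addLeft]
  abel

theorem subLeft_zsmul_mem_closure (a : A) (k : ℤ) :
    Equiv.subLeft (k • a) ∈ Subgroup.closure {Equiv.subLeft a, Equiv.subLeft 0} := by
  have h : Equiv.subLeft (k • a) =
      (Equiv.subLeft a * Equiv.subLeft 0) ^ k * Equiv.subLeft 0 := by
    ext x
    simp only [Perm.mul_apply, subLeft_mul_subLeft, zsmul_addLeft, coe_addLeft, subLeft_apply,
      sub_zero, zero_sub]
    abel
  have ha : Equiv.subLeft a ∈ Subgroup.closure {Equiv.subLeft a, Equiv.subLeft (0 : A)} :=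
    Subgroup.subset_closure (by simp)
  have h0 : Equiv.subLeft 0 ∈ Subgroup.closure {Equiv.subLeft a, Equiv.subLeft (0 : A)} :=
    Subgroup.subset_closure (by simp)
  rw [h]
  exact mul_mem (zpow_mem (mul_mem ha h0) k) h0

theorem subLeft_conj_subLeft (c a : A) :
    Equiv.subLeft c * Equiv.subLeft a * (Equiv.subLeft c)⁻¹ = Equiv.subLeft (2 • c - a) := by
  ext x
  simp only [Perm.mul_apply, Perm.inv_def, subLeft_apply, subLeft_symm_apply, two_nsmul]
  abel

end Equiv

theorem ZMod.exists_two_mul_eq_one_iff_odd {s : ℕ} : (∃ c : ZMod s, 2 * c = 1) ↔ Odd s := by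
  rw [← Nat.coprime_two_left, ← ZMod.isUnit_iff_coprime, isUnit_iff_exists_inv]
  simp

theorem ZMod.subLeft_mem_closure {s : ℕ} (c : ZMod s) :
    Equiv.subLeft c ∈ Subgroup.closure {Equiv.subLeft 1, Equiv.subLeft 0} := by
  obtain ⟨k, rfl⟩ := ZMod.intCast_surjective c
  simpa using subLeft_zsmul_mem_closure (1 : ZMod s) k

section CubicToroid

variable {n s : ℕ} (hn : 0 < n)

def cubicToroidGroup (n s : ℕ) (hn : 0 < n) : Subgroup (Perm (Fin n → ZMod s)) :=
  Subgroup.closure (Set.range (cubicToroidGen n s hn))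

theorem cubicToroidGen_mem_cubicToroidGroup (i : Fin (n + 1)) :
    cubicToroidGen n s hn i ∈ cubicToroidGroup n s hn :=
  Subgroup.subset_closure ⟨i, rfl⟩

theorem cubicToroidGen_zero :
    cubicToroidGen n s hn 0 = coordwisePerm (Pi.mulSingle ⟨0, hn⟩ (Equiv.subLeft 1)) := by
  ext x i
  change Function.update x ⟨0, hn⟩ (1 - x ⟨0, hn⟩) i = _
  by_cases hi : i = ⟨0, hn⟩ <;> simp [hi]

theorem cubicToroidGen_last :
    cubicToroidGen n s hn (Fin.last n) =
      coordwisePerm (Pi.mulSingle ⟨n - 1, by omega⟩ (Equiv.subLeft 0)) := by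
  rw [cubicToroidGen, dif_neg (by simpa using hn.ne'), dif_pos (Fin.val_last n)]
  ext x i
  change Function.update x _ (-x _) i = _
  by_cases hi : i = ⟨n - 1, by omega⟩ <;> simp [hi]

theorem cubicToroidGen_eq_permuteCoords (i : Fin (n + 1)) (h0 : (i : ℕ) ≠ 0)
    (hl : (i : ℕ) ≠ n) :
    cubicToroidGen n s hn i = permuteCoords (swap ⟨i - 1, by omega⟩ ⟨i, by omega⟩) := by
  simp only [cubicToroidGen, h0, hl, dite_false]
  rfl

theorem permuteCoords_mem_cubicToroidGroup (p : Perm (Fin n)) :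
    permuteCoords p ∈ cubicToroidGroup n s hn := by
  obtain ⟨m, rfl⟩ := Nat.exists_eq_add_one_of_ne_zero hn.ne'
  suffices Submonoid.closure (Set.range fun i : Fin m ↦ swap i.castSucc i.succ) ≤
      ((cubicToroidGroup (m + 1) s hn).comap permuteCoords).toSubmonoid by
    exact this (by rw [Perm.mclosure_swap_castSucc_succ]; trivial)
  rw [Submonoid.closure_le]
  rintro _ ⟨i, rfl⟩
  exact Subgroup.subset_closure
    ⟨_, cubicToroidGen_eq_permuteCoords hn ⟨i + 1, by omega⟩ (by simp) (by simp; omega)⟩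

theorem coordwisePerm_mulSingle_subLeft_mem_cubicToroidGroup (k : Fin n) (c : ZMod s) :
    coordwisePerm (Pi.mulSingle k (Equiv.subLeft c)) ∈ cubicToroidGroup n s hn := by
  have transport : ∀ j f, coordwisePerm (Pi.mulSingle j f) ∈ cubicToroidGroup n s hn →
      coordwisePerm (Pi.mulSingle k f) ∈ cubicToroidGroup n s hn := by
    intro j f h
    rw [← swap_apply_left j k, ← permuteCoords_conj_coordwisePerm_mulSingle]
    have hσ := permuteCoords_mem_cubicToroidGroup (s := s) hn (swap j k)
    exact mul_mem (mul_mem hσ h) (inv_mem hσ)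
  suffices Subgroup.closure {Equiv.subLeft 1, Equiv.subLeft 0} ≤
      (cubicToroidGroup n s hn).comap (coordwisePerm.comp (MonoidHom.mulSingle _ k)) from
    this (ZMod.subLeft_mem_closure c)
  rw [Subgroup.closure_le]
  rintro _ (rfl | rfl)
  · exact transport _ _ (cubicToroidGen_zero hn ▸ cubicToroidGen_mem_cubicToroidGroup hn 0)
  · exact transport _ _ (cubicToroidGen_last hn ▸ cubicToroidGen_mem_cubicToroidGroup hn _)

def dualizer (n s : ℕ) (c : ZMod s) : Perm (Fin n → ZMod s) :=
  permuteCoords Fin.revPerm * coordwisePerm fun _ ↦ Equiv.subLeft c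

theorem dualizer_mem_cubicToroidGroup (c : ZMod s) : dualizer n s c ∈ cubicToroidGroup n s hn :=
  mul_mem (permuteCoords_mem_cubicToroidGroup hn _)
    (Subgroup.pi_mem_of_mulSingle_mem (H := (cubicToroidGroup n s hn).comap coordwisePerm) _
      fun k ↦ coordwisePerm_mulSingle_subLeft_mem_cubicToroidGroup hn k c)

theorem dualizer_conj_permuteCoords (c : ZMod s) (p : Perm (Fin n)) :
    dualizer n s c * permuteCoords p * (dualizer n s c)⁻¹ =
      permuteCoords (Fin.revPerm * p * Fin.revPerm⁻¹) := by
  ext x i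
  simp [dualizer, Perm.mul_apply, Perm.inv_def]

theorem dualizer_conj_coordwisePerm_mulSingle (c : ZMod s) (k : Fin n) (f : Perm (ZMod s)) :
    dualizer n s c * coordwisePerm (Pi.mulSingle k f) * (dualizer n s c)⁻¹ =
      coordwisePerm (Pi.mulSingle k.rev (Equiv.subLeft c * f * (Equiv.subLeft c)⁻¹)) := by
  ext x i
  simp only [dualizer, mul_inv_rev, Perm.inv_def, Perm.mul_apply, permuteCoords_apply,
    permuteCoords_symm_apply, coordwisePerm_apply, coordwisePerm_symm_apply, Fin.revPerm_symm,
    Fin.revPerm_apply, Fin.rev_rev, Pi.mulSingle_apply, Fin.rev_eq_iff]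
  split_ifs <;> simp

theorem dualizer_conj_cubicToroidGen {c : ZMod s} (hc : 2 * c = 1) (i : Fin (n + 1)) :
    dualizer n s c * cubicToroidGen n s hn i * (dualizer n s c)⁻¹ =
      cubicToroidGen n s hn i.rev := by
  have hc' : 2 • c = 1 := by rw [two_nsmul, ← two_mul, hc]
  by_cases h0 : (i : ℕ) = 0
  · obtain rfl : i = 0 := Fin.ext h0
    rw [Fin.rev_zero, cubicToroidGen_zero, cubicToroidGen_last,
      dualizer_conj_coordwisePerm_mulSingle, subLeft_conj_subLeft, hc', sub_self]
    rfl
  by_cases hl : (i : ℕ) = n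
  · obtain rfl : i = Fin.last n := Fin.ext hl
    rw [Fin.rev_last, cubicToroidGen_zero, cubicToroidGen_last,
      dualizer_conj_coordwisePerm_mulSingle, subLeft_conj_subLeft, hc', sub_zero]
    congr 3
    ext; simp; omega
  rw [cubicToroidGen_eq_permuteCoords hn i h0 hl,
    cubicToroidGen_eq_permuteCoords hn i.rev (by simp; omega) (by simp; omega),
    dualizer_conj_permuteCoords, ← swap_apply_apply, swap_comm]
  congr 2 <;> ext <;> simp <;> omega

theorem odd_of_conj_cubicToroidGen_last_eq_zero (α : Perm (Fin n → ZMod s))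
    (h : α * cubicToroidGen n s hn (Fin.last n) * α⁻¹ = cubicToroidGen n s hn 0) : Odd s := by
  have hfix : cubicToroidGen n s hn 0 (α 0) = α 0 := by
    have hzero : cubicToroidGen n s hn (Fin.last n) 0 = 0 := by
      rw [cubicToroidGen_last]
      ext j
      by_cases hj : j = ⟨n - 1, by omega⟩ <;> simp [hj]
    rw [← h]
    simp [Perm.mul_apply, hzero]
  rw [cubicToroidGen_zero] at hfix
  have key := congrFun hfix ⟨0, hn⟩
  simp only [coordwisePerm_apply, Pi.mulSingle_eq_same, subLeft_apply] at key
  exact ZMod.exists_two_mul_eq_one_iff_odd.mp ⟨α 0 ⟨0, hn⟩, by linear_combination -key⟩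

end CubicToroid

/-- The cubic toroid `{4, 3^{n-2}, 4}_{(s,0^{n-1})}` is internally self-dual iff `s`
is odd: the group generated by `ρ₀, …, ρₙ` contains an element `α` with
`α ρᵢ α⁻¹ = ρ_{n-i}` for all `i` if and only if `s` is odd. -/
theorem cubic_toroid_internally_self_dual_iff_odd (n s : ℕ) (hn : 2 ≤ n) :
    (∃ α ∈ Subgroup.closure (Set.range (cubicToroidGen n s (by omega))),
      ∀ i : Fin (n + 1),
        α * cubicToroidGen n s (by omega) i * α⁻¹ = cubicToroidGen n s (by omega) i.rev)
      ↔ Odd s := by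
  constructor
  · rintro ⟨α, -, hα⟩
    have hlast := hα (Fin.last n)
    rw [Fin.rev_last] at hlast
    exact odd_of_conj_cubicToroidGen_last_eq_zero _ α hlast
  · intro hs
    obtain ⟨c, hc⟩ := ZMod.exists_two_mul_eq_one_iff_odd.mpr hs
    exact ⟨dualizer n s c, dualizer_mem_cubicToroidGroup _ c, dualizer_conj_cubicToroidGen _ hc⟩
end

section
/- Let Γ with generators ρ₀, …, ρ_{n−1} be a string C-group of rank n (n ≥ 2), with each ρᵢ of order 2. If α ∈ Γ is dualizing, then α does not lie in the subgroup generated by ρ₀, …, ρ_{n−2}, and α does not lie in the subgroup generated by ρ₁, …, ρ_{n−1}. -/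
/-!
Conjugation by a dualizing element `α` swaps `ρ₀` and `ρ_{n-1}`. If `α` lay in the subgroup
generated by `{ρ i | i ∈ I}`, that subgroup would be closed under the swap, so it would contain
both extreme generators whenever it contains one of them. But by the intersection property a
generator `ρ j` lies in the subgroup generated by `{ρ i | i ∈ I}` only if `j ∈ I`, and each of
the two subgroups in question contains exactly one of `ρ₀`, `ρ_{n-1}`.
-/

namespace IsStringCGroup

variable {G : Type*} [Group G] {n : ℕ} {ρ : Fin n → G}

theorem apply_ne_one (hC : IsStringCGroup ρ) (i : Fin n) : ρ i ≠ 1 := by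
  intro h
  have := hC.2.1 i
  rw [h, orderOf_one] at this
  omega

theorem apply_mem_closure_image_iff (hC : IsStringCGroup ρ) {I : Set (Fin n)} {j : Fin n} :
    ρ j ∈ Subgroup.closure (ρ '' I) ↔ j ∈ I := by
  refine ⟨fun hj => ?_, fun hj => Subgroup.subset_closure (Set.mem_image_of_mem ρ hj)⟩
  by_contra hjI
  have hsingleton : ρ j ∈ Subgroup.closure (ρ '' {j}) :=
    Subgroup.subset_closure (Set.mem_image_of_mem ρ rfl)
  have hinter : ρ j ∈ Subgroup.closure (ρ '' (I ∩ {j})) := by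
    rw [← hC.2.2.2]
    exact ⟨hj, hsingleton⟩
  rw [Set.inter_singleton_eq_empty.mpr hjI, Set.image_empty, Subgroup.closure_empty,
    Subgroup.mem_bot] at hinter
  exact hC.apply_ne_one j hinter

theorem rev_mem_of_dualizing_mem_closure (hC : IsStringCGroup ρ) {α : G}
    (hα : IsDualizing ρ α) {I : Set (Fin n)} (hαI : α ∈ Subgroup.closure (ρ '' I))
    {i : Fin n} (hi : i ∈ I) : i.rev ∈ I := by
  rw [← hC.apply_mem_closure_image_iff, ← hα i]
  exact mul_mem (mul_mem hαI (hC.apply_mem_closure_image_iff.mpr hi)) (inv_mem hαI)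

end IsStringCGroup

/-- In a string C-group of rank `n ≥ 2`, a dualizing element lies neither in the
subgroup generated by `ρ₀, …, ρ_{n-2}` nor in the subgroup generated by
`ρ₁, …, ρ_{n-1}`. -/
theorem dualizing_not_in_facet_or_vertex_subgroup {G : Type*} [Group G] {n : ℕ}
    (hn : 2 ≤ n) (ρ : Fin n → G) (hC : IsStringCGroup ρ)
    (α : G) (hα : IsDualizing ρ α) :
    α ∉ Subgroup.closure (ρ '' {i : Fin n | (i : ℕ) < n - 1}) ∧
    α ∉ Subgroup.closure (ρ '' {i : Fin n | 0 < (i : ℕ)}) := by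
  have hfirst_rev : (⟨0, by omega⟩ : Fin n).rev = ⟨n - 1, by omega⟩ := by ext; simp
  have hlast_rev : (⟨n - 1, by omega⟩ : Fin n).rev = ⟨0, by omega⟩ := by
    ext; simp only [Fin.val_rev]; omega
  constructor
  · intro hαI
    have hlast_mem := hC.rev_mem_of_dualizing_mem_closure hα hαI (i := ⟨0, by omega⟩)
      (show 0 < n - 1 by omega)
    simp [hfirst_rev] at hlast_mem
  · intro hαI
    have hfirst_mem := hC.rev_mem_of_dualizing_mem_closure hα hαI (i := ⟨n - 1, by omega⟩)
      (show 0 < n - 1 by omega)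
    simp [hlast_rev] at hfirst_mem
end

section
/- Let G be a group and ρ₀, ρ₁, ρ₂ ∈ G with ρ₀² = ρ₁² = ρ₂² = 1 and ρ₀ρ₂ = ρ₂ρ₀. Define λ₀ = ρ₀ρ₂, λ₁ = ρ₁, λ₂ = ρ₀. Then there exists α ∈ G with αρ₀α⁻¹ = ρ₀ρ₂, αρ₁α⁻¹ = ρ₁, αρ₂α⁻¹ = ρ₂ if and only if there exists β ∈ G with βλᵢβ⁻¹ = λ_{2−i} for i = 0, 1, 2. (A regular polyhedron P is internally self-Petrie if and only if (P*)^π is internally self-dual.) -/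
theorem conj_mul_eq_left_iff {G : Type*} [Group G] {g x y : G} (hy : y ^ 2 = 1)
    (hx : g * x * g⁻¹ = x * y) : g * (x * y) * g⁻¹ = x ↔ g * y * g⁻¹ = y := by
  have hy_inv : y⁻¹ = y := inv_eq_of_mul_eq_one_left (by rwa [← sq])
  calc g * (x * y) * g⁻¹ = x ↔ x * (y * (g * y * g⁻¹)) = x := by
        rw [show g * (x * y) * g⁻¹ = g * x * g⁻¹ * (g * y * g⁻¹) by group, hx, mul_assoc]
    _ ↔ g * y * g⁻¹ = y⁻¹ := by rw [mul_eq_left, mul_eq_one_iff_inv_eq, eq_comm]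
    _ ↔ g * y * g⁻¹ = y := by rw [hy_inv]

theorem internally_self_petrie_iff_dual_petrial_internally_self_dual_general
    {G : Type*} [Group G] (ρ₀ ρ₁ ρ₂ : G)
    (h₂ : ρ₂ ^ 2 = 1) :
    (∃ α : G, α * ρ₀ * α⁻¹ = ρ₀ * ρ₂ ∧ α * ρ₁ * α⁻¹ = ρ₁ ∧ α * ρ₂ * α⁻¹ = ρ₂) ↔
    (∃ β : G, β * (ρ₀ * ρ₂) * β⁻¹ = ρ₀ ∧ β * ρ₁ * β⁻¹ = ρ₁ ∧
      β * ρ₀ * β⁻¹ = ρ₀ * ρ₂) := by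
  refine exists_congr fun g => ⟨?_, ?_⟩
  · rintro ⟨hρ₀, hρ₁, hρ₂⟩
    exact ⟨(conj_mul_eq_left_iff h₂ hρ₀).2 hρ₂, hρ₁, hρ₀⟩
  · rintro ⟨hρ₀ρ₂, hρ₁, hρ₀⟩
    exact ⟨hρ₀, hρ₁, (conj_mul_eq_left_iff h₂ hρ₀).1 hρ₀ρ₂⟩

/-- For a group generated by involutions `ρ₀, ρ₁, ρ₂` with `ρ₀` and `ρ₂` commuting,
there is an element conjugating `ρ₀ ↦ ρ₀ρ₂`, `ρ₁ ↦ ρ₁`, `ρ₂ ↦ ρ₂` (internal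
self-Petriality) iff there is an element `β` conjugating `λᵢ ↦ λ_{2-i}` for the
generators `λ₀ = ρ₀ρ₂`, `λ₁ = ρ₁`, `λ₂ = ρ₀` (internal self-duality of `(P*)^π`). -/
theorem internally_self_petrie_iff_dual_petrial_internally_self_dual
    {G : Type*} [Group G] (ρ₀ ρ₁ ρ₂ : G)
    (h₀ : ρ₀ ^ 2 = 1) (h₁ : ρ₁ ^ 2 = 1) (h₂ : ρ₂ ^ 2 = 1)
    (hc : ρ₀ * ρ₂ = ρ₂ * ρ₀) :
    (∃ α : G, α * ρ₀ * α⁻¹ = ρ₀ * ρ₂ ∧ α * ρ₁ * α⁻¹ = ρ₁ ∧ α * ρ₂ * α⁻¹ = ρ₂) ↔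
    (∃ β : G, β * (ρ₀ * ρ₂) * β⁻¹ = ρ₀ ∧ β * ρ₁ * β⁻¹ = ρ₁ ∧
      β * ρ₀ * β⁻¹ = ρ₀ * ρ₂) :=
  internally_self_petrie_iff_dual_petrial_internally_self_dual_general ρ₀ ρ₁ ρ₂ h₂
end

section
/- Let n ≥ 1 and let π₁ and π₂ be permutations of a set with n elements, each acting as a single n-cycle on all n points, with π₁ ≠ π₂. Suppose π₁^{d₁} = π₂^{d₂} for integers d₁, d₂, and suppose that for some positive integer k there is a unique point i such that π₁^j(i) = π₂^j(i) for all j with 1 ≤ j ≤ k. Then d₁ ≡ 0 (mod n) and d₂ ≡ 0 (mod n), i.e., π₁^{d₁} = π₂^{d₂} is the identity. -/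
/-!
`σ := π₁ ^ d₁ = π₂ ^ d₂` commutes with every power of `π₁` and of `π₂`, so it maps points at which
the first `k` powers of `π₁` and `π₂` agree to points with the same property. Hence `σ` fixes the
unique such point. A power of an `n`-cycle that fixes one point is trivial, with exponent
divisible by `n`.
-/

namespace Equiv.Perm

variable {α : Type*}

theorem apply_apply_eq_of_commute {σ f g : Perm α} (hf : Commute σ f) (hg : Commute σ g) {x : α}
    (h : f x = g x) : f (σ x) = g (σ x) := by
  rw [← mul_apply, ← hf.eq, mul_apply, h, ← mul_apply, hg.eq, mul_apply]

variable [Fintype α] [DecidableEq α]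

theorem IsCycle.isCycleOn_univ {f : Perm α} (hf : f.IsCycle) (hs : f.support = Finset.univ) :
    f.IsCycleOn (Finset.univ : Finset α) := by
  convert hf.isCycleOn
  ext x
  simp [← mem_support, hs]

theorem IsCycle.zpow_apply_eq_self_iff_of_support_eq_univ {f : Perm α} (hf : f.IsCycle)
    (hs : f.support = Finset.univ) (x : α) {d : ℤ} :
    (f ^ d) x = x ↔ (Fintype.card α : ℤ) ∣ d :=
  (hf.isCycleOn_univ hs).zpow_apply_eq (Finset.mem_univ x)

end Equiv.Perm

open Equiv.Perm in
theorem distinct_cycles_common_power_trivial_general (n : ℕ)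
    (π₁ π₂ : Equiv.Perm (Fin n))
    (h₁ : π₁.IsCycle ∧ π₁.support = Finset.univ)
    (h₂ : π₂.IsCycle ∧ π₂.support = Finset.univ)
    (d₁ d₂ : ℤ) (hd : π₁ ^ d₁ = π₂ ^ d₂)
    (k : ℕ)
    (huniq : ∃! i : Fin n, ∀ j : ℕ, 1 ≤ j → j ≤ k → (π₁ ^ j) i = (π₂ ^ j) i) :
    (n : ℤ) ∣ d₁ ∧ (n : ℤ) ∣ d₂ ∧ π₁ ^ d₁ = 1 := by
  obtain ⟨i, hi, huni⟩ := huniq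
  have hσ₁ (j : ℕ) : Commute (π₁ ^ d₁) (π₁ ^ j) := ((Commute.refl π₁).zpow_left d₁).pow_right j
  have hσ₂ (j : ℕ) : Commute (π₁ ^ d₁) (π₂ ^ j) := hd ▸ ((Commute.refl π₂).zpow_left d₂).pow_right j
  have hfix : (π₁ ^ d₁) i = i :=
    huni _ fun j hj hjk => apply_apply_eq_of_commute (hσ₁ j) (hσ₂ j) (hi j hj hjk)
  have hd₁ : (n : ℤ) ∣ d₁ := by
    simpa using (h₁.1.zpow_apply_eq_self_iff_of_support_eq_univ h₁.2 i).1 hfix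
  have hd₂ : (n : ℤ) ∣ d₂ := by
    simpa using (h₂.1.zpow_apply_eq_self_iff_of_support_eq_univ h₂.2 i).1 (hd ▸ hfix)
  refine ⟨hd₁, hd₂, Equiv.ext fun x => ?_⟩
  exact (h₁.1.zpow_apply_eq_self_iff_of_support_eq_univ h₁.2 x).2 (by simpa using hd₁)

/-- Suppose `π₁ ≠ π₂` are permutations of `n` points, each a single `n`-cycle on all
`n` points, with `π₁ ^ d₁ = π₂ ^ d₂` for integers `d₁, d₂`.  If for some positive `k`
there is a unique point `i` with `π₁ ^ j i = π₂ ^ j i` for all `1 ≤ j ≤ k`, then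
`d₁ ≡ 0` and `d₂ ≡ 0 (mod n)`, i.e. `π₁ ^ d₁ = π₂ ^ d₂` is the identity. -/
theorem distinct_cycles_common_power_trivial (n : ℕ) (hn : 1 ≤ n)
    (π₁ π₂ : Equiv.Perm (Fin n))
    (h₁ : π₁.IsCycle ∧ π₁.support = Finset.univ)
    (h₂ : π₂.IsCycle ∧ π₂.support = Finset.univ)
    (hne : π₁ ≠ π₂)
    (d₁ d₂ : ℤ) (hd : π₁ ^ d₁ = π₂ ^ d₂)
    (k : ℕ) (hk : 0 < k)
    (huniq : ∃! i : Fin n, ∀ j : ℕ, 1 ≤ j → j ≤ k → (π₁ ^ j) i = (π₂ ^ j) i) :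
    (n : ℤ) ∣ d₁ ∧ (n : ℤ) ∣ d₂ ∧ π₁ ^ d₁ = 1 :=
  distinct_cycles_common_power_trivial_general n π₁ π₂ h₁ h₂ d₁ d₂ hd k huniq
end
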